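/- Let S_1,…,S_m be C-nondisturbing operators on H⊗K with probe operators B_i^k (so S_k(ψ_i ⊗ φ) = ψ_i ⊗ B_i^k φ). Then for any operators ρ on H, η on K and F on K, tr_K[ (∑_k S_k(ρ⊗η)S_k*) (I_H ⊗ F) ] = ∑_{i,j,k} tr(B_i^k η (B_j^k)* F) P_{ψ_i} ρ P_{ψ_j} (the measured instrument of a C-nondisturbing measurement model with probe effect F). -/

import Mathlib

open scoped ComplexOrder Kronecker

noncomputable section

/-- Tensor product of vectors in the concrete model `EuclideanSpace ℂ (Fin n × Fin m)` of `H ⊗ K`. -/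
def tens {n m : ℕ} (x : EuclideanSpace ℂ (Fin n)) (y : EuclideanSpace ℂ (Fin m)) :
    EuclideanSpace ℂ (Fin n × Fin m) :=
  (WithLp.equiv 2 _).symm fun p => x p.1 * y p.2

/-- The rank-one operator `|x⟩⟨y|`. -/
def ketBra {ι : Type*} [Fintype ι] (x y : EuclideanSpace ℂ ι) :
    EuclideanSpace ℂ ι →ₗ[ℂ] EuclideanSpace ℂ ι where
  toFun z := (inner ℂ y z : ℂ) • x
  map_add' a b := by simp [inner_add_right, add_smul]
  map_smul' c a := by simp [inner_smul_right, smul_smul]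

/-- The tensor product of operators. -/
def opTens {n m : ℕ}
    (S : EuclideanSpace ℂ (Fin n) →ₗ[ℂ] EuclideanSpace ℂ (Fin n))
    (T : EuclideanSpace ℂ (Fin m) →ₗ[ℂ] EuclideanSpace ℂ (Fin m)) :
    EuclideanSpace ℂ (Fin n × Fin m) →ₗ[ℂ] EuclideanSpace ℂ (Fin n × Fin m) :=
  Matrix.toEuclideanLin
    ((Matrix.toEuclideanLin.symm S) ⊗ₖ (Matrix.toEuclideanLin.symm T))

/-- `A` is C-nondisturbing for the context `C = {P_{ψ i}}`. -/
def Nondisturbing {n m : ℕ} (ψ : OrthonormalBasis (Fin n) ℂ (EuclideanSpace ℂ (Fin n)))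
    (A : EuclideanSpace ℂ (Fin n × Fin m) →ₗ[ℂ] EuclideanSpace ℂ (Fin n × Fin m)) : Prop :=
  ∀ i, A ∘ₗ opTens (ketBra (ψ i) (ψ i)) LinearMap.id
      = opTens (ketBra (ψ i) (ψ i)) LinearMap.id ∘ₗ A

/-- `B i` are probe operators for `A`: `A (ψ i ⊗ φ) = ψ i ⊗ B i φ`. -/
def ProbeOps {n m : ℕ} (ψ : OrthonormalBasis (Fin n) ℂ (EuclideanSpace ℂ (Fin n)))
    (A : EuclideanSpace ℂ (Fin n × Fin m) →ₗ[ℂ] EuclideanSpace ℂ (Fin n × Fin m))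
    (B : Fin n → EuclideanSpace ℂ (Fin m) →ₗ[ℂ] EuclideanSpace ℂ (Fin m)) : Prop :=
  ∀ i φv, A (tens (ψ i) φv) = tens (ψ i) (B i φv)

/-- Loewner order: `S ≤ T` iff `⟪φ, (T - S) φ⟫` is real and nonnegative for every `φ`. -/
def opLE {ι : Type*} [Fintype ι]
    (S T : EuclideanSpace ℂ ι →ₗ[ℂ] EuclideanSpace ℂ ι) : Prop :=
  ∀ φv, 0 ≤ (inner ℂ φv ((T - S) φv) : ℂ)

/-- The partial trace over `H`. -/
def trH {n m : ℕ} (ψ : OrthonormalBasis (Fin n) ℂ (EuclideanSpace ℂ (Fin n)))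
    (φ : OrthonormalBasis (Fin m) ℂ (EuclideanSpace ℂ (Fin m)))
    (T : EuclideanSpace ℂ (Fin n × Fin m) →ₗ[ℂ] EuclideanSpace ℂ (Fin n × Fin m)) :
    EuclideanSpace ℂ (Fin m) →ₗ[ℂ] EuclideanSpace ℂ (Fin m) :=
  ∑ j, ∑ k, (∑ i, (inner ℂ (tens (ψ i) (φ j)) (T (tens (ψ i) (φ k))) : ℂ)) • ketBra (φ j) (φ k)

/-- The partial trace over `K`. -/
def trK {n m : ℕ} (ψ : OrthonormalBasis (Fin n) ℂ (EuclideanSpace ℂ (Fin n)))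
    (φ : OrthonormalBasis (Fin m) ℂ (EuclideanSpace ℂ (Fin m)))
    (T : EuclideanSpace ℂ (Fin n × Fin m) →ₗ[ℂ] EuclideanSpace ℂ (Fin n × Fin m)) :
    EuclideanSpace ℂ (Fin n) →ₗ[ℂ] EuclideanSpace ℂ (Fin n) :=
  ∑ i, ∑ k, (∑ j, (inner ℂ (tens (ψ i) (φ j)) (T (tens (ψ k) (φ j))) : ℂ)) • ketBra (ψ i) (ψ k)

section Aux

variable {n m : ℕ}

lemma tens_apply' (x : EuclideanSpace ℂ (Fin n)) (y : EuclideanSpace ℂ (Fin m)) (p : Fin n × Fin m) :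
    tens x y p = x p.1 * y p.2 := rfl

lemma inner_tens (x z : EuclideanSpace ℂ (Fin n)) (y w : EuclideanSpace ℂ (Fin m)) :
    (inner ℂ (tens x y) (tens z w) : ℂ) = (inner ℂ x z : ℂ) * (inner ℂ y w : ℂ) := by
  simp only [PiLp.inner_apply, RCLike.inner_apply, tens_apply', map_mul]
  rw [Fintype.sum_prod_type, Finset.sum_mul_sum]
  exact Finset.sum_congr rfl fun i _ => Finset.sum_congr rfl fun j _ => by ring

lemma sum_euclid_apply {ι κ : Type*} [Fintype κ] (s : Finset ι)
    (f : ι → EuclideanSpace ℂ κ) (q : κ) : (∑ i ∈ s, f i) q = ∑ i ∈ s, f i q := by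
  induction s using Finset.cons_induction with
  | empty => rfl
  | cons a s ha ih => rw [Finset.sum_cons, Finset.sum_cons, ← ih]; rfl

lemma tens_sum_left {ι : Type*} (s : Finset ι) (f : ι → EuclideanSpace ℂ (Fin n))
    (y : EuclideanSpace ℂ (Fin m)) : tens (∑ i ∈ s, f i) y = ∑ i ∈ s, tens (f i) y := by
  ext p
  simp [tens_apply', sum_euclid_apply, Finset.sum_mul]

lemma tens_smul_left (c : ℂ) (x : EuclideanSpace ℂ (Fin n)) (y : EuclideanSpace ℂ (Fin m)) :
    tens (c • x) y = c • tens x y := by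
  ext p
  simp [tens_apply', mul_assoc]

lemma toEL_apply {a b : Type*} [Fintype a] [Fintype b] [DecidableEq b]
    (M : Matrix a b ℂ) (v : EuclideanSpace ℂ b) (i : a) :
    (Matrix.toEuclideanLin M v) i = ∑ j, M i j * v j := by
  simp [Matrix.toEuclideanLin_apply, Matrix.mulVec, dotProduct]

lemma apply_eq_sum {a : ℕ} (S : EuclideanSpace ℂ (Fin a) →ₗ[ℂ] EuclideanSpace ℂ (Fin a))
    (v : EuclideanSpace ℂ (Fin a)) (i : Fin a) :
    S v i = ∑ j, (Matrix.toEuclideanLin.symm S) i j * v j := by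
  conv_lhs => rw [← Matrix.toEuclideanLin.apply_symm_apply S]
  exact toEL_apply _ _ _

lemma opTens_tens (S : EuclideanSpace ℂ (Fin n) →ₗ[ℂ] EuclideanSpace ℂ (Fin n))
    (T : EuclideanSpace ℂ (Fin m) →ₗ[ℂ] EuclideanSpace ℂ (Fin m))
    (x : EuclideanSpace ℂ (Fin n)) (y : EuclideanSpace ℂ (Fin m)) :
    opTens S T (tens x y) = tens (S x) (T y) := by
  ext p
  rw [tens_apply', apply_eq_sum S, apply_eq_sum T, Finset.sum_mul_sum]
  simp only [opTens]
  rw [toEL_apply, Fintype.sum_prod_type]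
  exact Finset.sum_congr rfl fun i _ => Finset.sum_congr rfl fun j _ => by
    simp [Matrix.kroneckerMap_apply, tens_apply']; ring

lemma orthonormal_tens (ψ : OrthonormalBasis (Fin n) ℂ (EuclideanSpace ℂ (Fin n)))
    (φ : OrthonormalBasis (Fin m) ℂ (EuclideanSpace ℂ (Fin m))) :
    Orthonormal ℂ (fun p : Fin n × Fin m => tens (ψ p.1) (φ p.2)) := by
  rw [orthonormal_iff_ite]
  intro p q
  rw [inner_tens, orthonormal_iff_ite.mp ψ.orthonormal, orthonormal_iff_ite.mp φ.orthonormal]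
  by_cases h1 : p.1 = q.1 <;> by_cases h2 : p.2 = q.2 <;>
    simp [h1, h2, Prod.ext_iff]

lemma expand (ψ : OrthonormalBasis (Fin n) ℂ (EuclideanSpace ℂ (Fin n)))
    (φ : OrthonormalBasis (Fin m) ℂ (EuclideanSpace ℂ (Fin m)))
    (x : EuclideanSpace ℂ (Fin n × Fin m)) :
    ∑ p : Fin n × Fin m, (inner ℂ (tens (ψ p.1) (φ p.2)) x : ℂ) • tens (ψ p.1) (φ p.2) = x := by
  by_cases h : Nonempty (Fin n × Fin m)
  · have hon := orthonormal_tens ψ φ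
    have hcard : Fintype.card (Fin n × Fin m)
        = Module.finrank ℂ (EuclideanSpace ℂ (Fin n × Fin m)) := by
      simp [finrank_euclideanSpace]
    let bb := basisOfLinearIndependentOfCardEqFinrank hon.linearIndependent hcard
    have hbb : ⇑bb = fun p : Fin n × Fin m => tens (ψ p.1) (φ p.2) :=
      coe_basisOfLinearIndependentOfCardEqFinrank _ _
    let b := bb.toOrthonormalBasis (by rw [hbb]; exact hon)
    have hb : ∀ p : Fin n × Fin m, b p = tens (ψ p.1) (φ p.2) := by
      intro p
      simp only [b, Module.Basis.coe_toOrthonormalBasis, hbb]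
    calc ∑ p : Fin n × Fin m, (inner ℂ (tens (ψ p.1) (φ p.2)) x : ℂ) • tens (ψ p.1) (φ p.2)
        = ∑ p : Fin n × Fin m, (inner ℂ (b p) x : ℂ) • b p :=
          Finset.sum_congr rfl fun p _ => by rw [hb]
      _ = x := b.sum_repr' x
  · have : IsEmpty (Fin n × Fin m) := not_nonempty_iff.mp h
    ext p
    exact absurd ⟨p⟩ h

lemma trace_eq_sum_inner' (φ : OrthonormalBasis (Fin m) ℂ (EuclideanSpace ℂ (Fin m)))
    (T : EuclideanSpace ℂ (Fin m) →ₗ[ℂ] EuclideanSpace ℂ (Fin m)) :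
    LinearMap.trace ℂ (EuclideanSpace ℂ (Fin m)) T = ∑ j, (inner ℂ (φ j) (T (φ j)) : ℂ) := by
  rw [LinearMap.trace_eq_matrix_trace ℂ φ.toBasis]
  simp [Matrix.trace, Matrix.diag, LinearMap.toMatrix_apply,
    OrthonormalBasis.coe_toBasis, OrthonormalBasis.coe_toBasis_repr_apply,
    OrthonormalBasis.repr_apply_apply]

lemma probe_adjoint (ψ : OrthonormalBasis (Fin n) ℂ (EuclideanSpace ℂ (Fin n)))
    (φ : OrthonormalBasis (Fin m) ℂ (EuclideanSpace ℂ (Fin m)))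
    {S : EuclideanSpace ℂ (Fin n × Fin m) →ₗ[ℂ] EuclideanSpace ℂ (Fin n × Fin m)}
    {B : Fin n → EuclideanSpace ℂ (Fin m) →ₗ[ℂ] EuclideanSpace ℂ (Fin m)}
    (hp : ProbeOps ψ S B) (c : Fin n) (w : EuclideanSpace ℂ (Fin m)) :
    LinearMap.adjoint S (tens (ψ c) w) = tens (ψ c) (LinearMap.adjoint (B c) w) := by
  apply ext_inner_right ℂ
  intro v
  conv_lhs => rw [← expand ψ φ v]
  conv_rhs => rw [← expand ψ φ v]
  rw [inner_sum, inner_sum]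
  refine Finset.sum_congr rfl fun p _ => ?_
  rw [inner_smul_right, inner_smul_right, LinearMap.adjoint_inner_left, hp p.1 (φ p.2),
    inner_tens, inner_tens, LinearMap.adjoint_inner_left]
  by_cases hc : c = p.1
  · subst hc; rfl
  · rw [orthonormal_iff_ite.mp ψ.orthonormal, if_neg hc]
    ring

end Aux

theorem stmt17 {n m p : ℕ} (ψ : OrthonormalBasis (Fin n) ℂ (EuclideanSpace ℂ (Fin n))) (φb : OrthonormalBasis (Fin m) ℂ (EuclideanSpace ℂ (Fin m)))
    (S : Fin p → (EuclideanSpace ℂ (Fin n × Fin m) →ₗ[ℂ] EuclideanSpace ℂ (Fin n × Fin m))) (B : Fin n → Fin p → (EuclideanSpace ℂ (Fin m) →ₗ[ℂ] EuclideanSpace ℂ (Fin m)))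
    (hnd : ∀ k, Nondisturbing ψ (S k))
    (hprobe : ∀ k, ProbeOps ψ (S k) (fun i => B i k))
    (ρ : EuclideanSpace ℂ (Fin n) →ₗ[ℂ] EuclideanSpace ℂ (Fin n)) (η F : EuclideanSpace ℂ (Fin m) →ₗ[ℂ] EuclideanSpace ℂ (Fin m)) :
    trK ψ φb ((∑ k, S k ∘ₗ opTens ρ η ∘ₗ LinearMap.adjoint (S k)) ∘ₗ opTens LinearMap.id F) =
      ∑ i, ∑ j, ∑ k, (LinearMap.trace ℂ (EuclideanSpace ℂ (Fin m)) (B i k ∘ₗ η ∘ₗ LinearMap.adjoint (B j k) ∘ₗ F)) •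
        (ketBra (ψ i) (ψ i) ∘ₗ ρ ∘ₗ ketBra (ψ j) (ψ j)) := by
  have hketcomp : ∀ i j : Fin n,
      ketBra (ψ i) (ψ i) ∘ₗ ρ ∘ₗ ketBra (ψ j) (ψ j)
        = (inner ℂ (ψ i) (ρ (ψ j)) : ℂ) • ketBra (ψ i) (ψ j) := by
    intro i j
    apply LinearMap.ext; intro z
    simp only [LinearMap.comp_apply, ketBra, LinearMap.coe_mk, AddHom.coe_mk,
      LinearMap.smul_apply, map_smul, inner_smul_right, smul_smul]
    rw [mul_comm]
  have key : ∀ (k : Fin p) (i j : Fin n) (t : Fin m),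
      (inner ℂ (tens (ψ i) (φb t))
        ((S k) (opTens ρ η (LinearMap.adjoint (S k) (opTens LinearMap.id F (tens (ψ j) (φb t)))))) : ℂ)
        = (inner ℂ (ψ i) (ρ (ψ j)) : ℂ) *
          (inner ℂ (φb t) ((B i k) (η (LinearMap.adjoint (B j k) (F (φb t))))) : ℂ) := by
    intro k i j t
    rw [opTens_tens, LinearMap.id_apply, probe_adjoint ψ φb (hprobe k) j (F (φb t)),
      opTens_tens]
    conv_lhs => rw [← ψ.sum_repr' (ρ (ψ j)), tens_sum_left]
    rw [map_sum, inner_sum]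
    have hterm : ∀ a : Fin n, (inner ℂ (tens (ψ i) (φb t))
        ((S k) (tens ((inner ℂ (ψ a) (ρ (ψ j)) : ℂ) • ψ a)
          (η (LinearMap.adjoint (B j k) (F (φb t)))))) : ℂ)
        = (inner ℂ (ψ a) (ρ (ψ j)) : ℂ) * ((inner ℂ (ψ i) (ψ a) : ℂ) *
          (inner ℂ (φb t) ((B a k) (η (LinearMap.adjoint (B j k) (F (φb t))))) : ℂ)) := by
      intro a
      rw [tens_smul_left, map_smul, inner_smul_right, hprobe k a, inner_tens]
    simp only [hterm]
    rw [Finset.sum_eq_single i]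
    · rw [orthonormal_iff_ite.mp ψ.orthonormal, if_pos rfl, one_mul]
    · intro a _ ha
      rw [orthonormal_iff_ite.mp ψ.orthonormal, if_neg (Ne.symm ha), zero_mul, mul_zero]
    · intro h
      exact absurd (Finset.mem_univ i) h
  unfold trK
  refine Finset.sum_congr rfl fun i _ => Finset.sum_congr rfl fun j _ => ?_
  simp only [hketcomp, smul_smul]
  rw [← Finset.sum_smul]
  congr 1
  simp only [LinearMap.comp_apply, LinearMap.sum_apply, inner_sum, key]
  rw [Finset.sum_comm]
  refine Finset.sum_congr rfl fun k _ => ?_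
  rw [trace_eq_sum_inner' φb, Finset.sum_mul, ← Finset.mul_sum]
  rw [Finset.mul_sum]
  refine Finset.sum_congr rfl fun t _ => ?_
  simp only [LinearMap.comp_apply]
  ring

end
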